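/- Let Q ∈ ℝ^{p×p} be symmetric positive definite and G ∈ ℝ^{p×p} satisfy QG + Gᵀ Q ≻ 0. Then for every s > 0 and every nonzero ω ∈ ℝ^p, ωᵀ (e^{-sG})ᵀ Q e^{-sG} ω < ωᵀ Q ω. -/

import Mathlib

/-! Along the flow `x t = exp (-t G) ω` the quadratic form `V x = xᵀ Q x` has derivative
`-(x t)ᵀ (Q G + Gᵀ Q) (x t)`, which is negative because `x t ≠ 0` (the matrix exponential is
invertible). Hence `t ↦ V (x t)` is strictly decreasing, and `V (x s) < V (x 0) = V ω`. -/

open Matrix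

section Derivatives

variable {𝕜 : Type*} [NontriviallyNormedField 𝕜] {m n : Type*} [Fintype m] [Fintype n]

theorem HasDerivAt.dotProduct {x y : 𝕜 → n → 𝕜} {x' y' : n → 𝕜} {t : 𝕜}
    (hx : HasDerivAt x x' t) (hy : HasDerivAt y y' t) :
    HasDerivAt (fun t => x t ⬝ᵥ y t) (x' ⬝ᵥ y t + x t ⬝ᵥ y') t := by
  simp only [_root_.dotProduct, ← Finset.sum_add_distrib]
  exact HasDerivAt.fun_sum fun i _ => (hasDerivAt_pi.1 hx i).fun_mul (hasDerivAt_pi.1 hy i)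

theorem HasDerivAt.mulVec [CompleteSpace 𝕜] (M : Matrix m n 𝕜) {x : 𝕜 → n → 𝕜} {x' : n → 𝕜}
    {t : 𝕜} (hx : HasDerivAt x x' t) : HasDerivAt (fun t => M *ᵥ x t) (M *ᵥ x') t :=
  M.mulVecLin.toContinuousLinearMap.hasFDerivAt.comp_hasDerivAt t hx

end Derivatives

section Lyapunov

variable {n : Type*} [Fintype n]

theorem dotProduct_mulVec_add_transpose_mul (Q A : Matrix n n ℝ) (x : n → ℝ) :
    x ⬝ᵥ ((Q * A + Aᵀ * Q) *ᵥ x) = (A *ᵥ x) ⬝ᵥ (Q *ᵥ x) + x ⬝ᵥ (Q *ᵥ (A *ᵥ x)) := by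
  rw [add_mulVec, dotProduct_add, ← mulVec_mulVec, ← mulVec_mulVec, dotProduct_mulVec _ Aᵀ,
    vecMul_transpose, add_comm]

variable [DecidableEq n]

theorem hasDerivAt_exp_smul_mulVec (A : Matrix n n ℝ) (ω : n → ℝ) (t : ℝ) :
    HasDerivAt (fun t => NormedSpace.exp (t • A) *ᵥ ω)
      (A *ᵥ (NormedSpace.exp (t • A) *ᵥ ω)) t := by
  -- `exp` only sees the topology, so any algebra norm inducing it will do.
  let _ : NormedRing (Matrix n n ℝ) := Matrix.linftyOpNormedRing
  let _ : NormedAlgebra ℝ (Matrix n n ℝ) := Matrix.linftyOpNormedAlgebra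
  rw [mulVec_mulVec]
  exact ((mulVecBilin ℝ ℝ).flip ω).toContinuousLinearMap.hasFDerivAt.comp_hasDerivAt t
    (hasDerivAt_exp_smul_const' A t)

theorem exp_mulVec_ne_zero (A : Matrix n n ℝ) {ω : n → ℝ} (hω : ω ≠ 0) :
    NormedSpace.exp A *ᵥ ω ≠ 0 := by
  rw [← mulVec_zero (NormedSpace.exp A)]
  exact (mulVec_injective_iff_isUnit.2 (isUnit_exp A)).ne hω

theorem hasDerivAt_quadForm_exp_smul_mulVec (Q A : Matrix n n ℝ) (ω : n → ℝ) (t : ℝ) :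
    HasDerivAt (fun t => (NormedSpace.exp (t • A) *ᵥ ω) ⬝ᵥ (Q *ᵥ (NormedSpace.exp (t • A) *ᵥ ω)))
      ((NormedSpace.exp (t • A) *ᵥ ω) ⬝ᵥ ((Q * A + Aᵀ * Q) *ᵥ (NormedSpace.exp (t • A) *ᵥ ω)))
      t := by
  rw [dotProduct_mulVec_add_transpose_mul]
  have hx := hasDerivAt_exp_smul_mulVec A ω t
  exact hx.dotProduct (hx.mulVec Q)

theorem strictAnti_quadForm_exp_neg_smul_mulVec {Q G : Matrix n n ℝ}
    (hG : (Q * G + Gᵀ * Q).PosDef) {ω : n → ℝ} (hω : ω ≠ 0) :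
    StrictAnti fun t : ℝ =>
      (NormedSpace.exp (t • -G) *ᵥ ω) ⬝ᵥ (Q *ᵥ (NormedSpace.exp (t • -G) *ᵥ ω)) := by
  refine strictAnti_of_hasDerivAt_neg (hasDerivAt_quadForm_exp_smul_mulVec Q (-G) ω) fun t => ?_
  have hpos := hG.dotProduct_mulVec_pos (exp_mulVec_ne_zero (t • -G) hω)
  rw [star_trivial] at hpos
  rwa [transpose_neg, mul_neg, neg_mul, ← neg_add, neg_mulVec, dotProduct_neg, neg_lt_zero]

end Lyapunov

theorem stmt13_general {p : ℕ} (Q G : Matrix (Fin p) (Fin p) ℝ)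
    (hmono : (Q * G + Gᵀ * Q).PosDef) :
    ∀ s : ℝ, 0 < s → ∀ ω : Fin p → ℝ, ω ≠ 0 →
      (NormedSpace.exp ((-s) • G) *ᵥ ω) ⬝ᵥ (Q *ᵥ (NormedSpace.exp ((-s) • G) *ᵥ ω))
        < ω ⬝ᵥ (Q *ᵥ ω) := by
  intro s hs ω hω
  have h := strictAnti_quadForm_exp_neg_smul_mulVec hmono hω hs
  simpa only [neg_zero, zero_smul, NormedSpace.exp_zero, one_mulVec, smul_neg, ← neg_smul] using h

theorem stmt13 {p : ℕ} (Q G : Matrix (Fin p) (Fin p) ℝ) (hQ : Q.PosDef)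
    (hmono : (Q * G + Gᵀ * Q).PosDef) :
    ∀ s : ℝ, 0 < s → ∀ ω : Fin p → ℝ, ω ≠ 0 →
      (NormedSpace.exp ((-s) • G) *ᵥ ω) ⬝ᵥ (Q *ᵥ (NormedSpace.exp ((-s) • G) *ᵥ ω))
        < ω ⬝ᵥ (Q *ᵥ ω) :=
  stmt13_general Q G hmono
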